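/- arXiv:2601.18167 — 10 statements merged into one kernel-verified Lean document; each statement's English description precedes it below -/
import Mathlib

section
/- Let n ≥ 2 be an integer and let t > 1 be a real number. Then (t^(2n) − (n+1)·t^n + n·t^(n−1)) / ((n+1)·(t^n − 1)^2) ≤ 1/(n+1). -/
theorem truncated_cone_x_le (n : ℕ) (hn : 2 ≤ n) (t : ℝ) (ht : 1 < t) :
    (t ^ (2 * n) - (n + 1) * t ^ n + n * t ^ (n - 1)) /
      ((n + 1) * (t ^ n - 1) ^ 2) ≤ 1 / (n + 1) := by
  obtain ⟨m, rfl⟩ : ∃ m, n = m + 1 := ⟨n - 1, by omega⟩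
  have ht0 : (0:ℝ) < t := lt_trans one_pos ht
  have htn : 1 < t ^ (m + 1) := one_lt_pow₀ ht (by omega)
  have hsum : (∑ i ∈ Finset.range m, t ^ i) ≤ m * t ^ m := by
    calc (∑ i ∈ Finset.range m, t ^ i) ≤ ∑ i ∈ Finset.range m, t ^ m := by
          apply Finset.sum_le_sum
          intro i hi
          exact pow_le_pow_right₀ (le_of_lt ht) (le_of_lt (Finset.mem_range.mp hi))
      _ = m * t ^ m := by rw [Finset.sum_const, Finset.card_range]; ring
  have hgeom : t ^ m - 1 = (∑ i ∈ Finset.range m, t ^ i) * (t - 1) := (geom_sum_mul t m).symm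
  have key : t ^ m - 1 ≤ (t - 1) * (m * t ^ m) := by
    rw [hgeom]
    have := mul_le_mul_of_nonneg_right hsum (le_of_lt (sub_pos.mpr ht))
    linarith
  -- key2 : (m+1) * t^m ≤ m * t^(m+1) + 1
  have key2 : ((m:ℝ) + 1) * t ^ m ≤ (m:ℝ) * t ^ (m + 1) + 1 := by
    have : t ^ (m + 1) = t * t ^ m := by ring
    nlinarith [key]
  have hD : (0:ℝ) < ((m:ℕ) + 1 + 1) * (t ^ (m + 1) - 1) ^ 2 :=
    mul_pos (by positivity) (pow_pos (sub_pos.mpr htn) 2)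
  have hnum : t ^ (2 * (m + 1)) - ((m:ℝ) + 1 + 1) * t ^ (m + 1) + ((m:ℝ) + 1) * t ^ (m + 1 - 1)
      ≤ (t ^ (m + 1) - 1) ^ 2 := by
    have h2n : t ^ (2 * (m + 1)) = (t ^ (m + 1)) ^ 2 := by rw [← pow_mul]; ring_nf
    simp only [Nat.add_sub_cancel]
    nlinarith [key2]
  have hcast : ((m + 1 : ℕ) : ℝ) = (m:ℝ) + 1 := by push_cast; ring
  simp only [Nat.add_sub_cancel] at hnum ⊢
  push_cast
  rw [div_le_div_iff₀ hD (by positivity)]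
  nlinarith [mul_le_mul_of_nonneg_right hnum (by positivity : (0:ℝ) ≤ (m:ℝ) + 1 + 1)]
end

section
/- Let n ≥ 2 be an integer and let t > 1 be a real number. Then (n·t^(n+1) − (n+1)·t^n + 1) / ((n+1)·(t^n − 1)^2) ≤ 1/(n+1). -/
theorem truncated_cone_y_le (n : ℕ) (hn : 2 ≤ n) (t : ℝ) (ht : 1 < t) :
    (n * t ^ (n + 1) - (n + 1) * t ^ n + 1) /
      ((n + 1) * (t ^ n - 1) ^ 2) ≤ 1 / (n + 1) := by
  have ht0 : (0:ℝ) < t := by linarith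
  have htn : (1:ℝ) < t ^ n := one_lt_pow₀ ht (by omega)
  have hb : 1 + (n:ℝ) * (t - 1) ≤ t ^ n := one_add_mul_sub_le_pow (by linarith) n
  have hnp : (0:ℝ) < (n:ℝ) + 1 := by positivity
  have hden : (0:ℝ) < ((n:ℝ) + 1) * (t ^ n - 1) ^ 2 :=
    mul_pos hnp (pow_pos (by linarith) 2)
  rw [div_le_div_iff₀ hden hnp]
  have key : (t ^ n) * (t ^ n - (1 + (n:ℝ) * (t - 1))) ≥ 0 :=
    mul_nonneg (by positivity) (by linarith)
  rw [pow_succ]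
  nlinarith [mul_nonneg hnp.le key]
end

section
/- Let n ≥ 2 be an integer and let t > 1 be a real number. Then (t^(2n) − (n+1)·t^n + n·t^(n−1)) / ((n+1)·(t^n − 1)^2) + (n·t^(n+1) − (n+1)·t^n + 1) / ((n+1)·(t^n − 1)^2) ≤ 1/n. -/
lemma cone_key (n : ℕ) (t : ℝ) (ht : 0 ≤ t) :
    (n:ℝ)^2 * t^(n-1) * (t-1)^2 ≤ (t^n - 1)^2 := by
  have h1 : t^n - 1 = (∑ i ∈ Finset.range n, t^i) * (t-1) := (geom_sum_mul t n).symm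
  rw [h1, mul_pow]
  have hcs := Finset.sum_mul_sq_le_sq_mul_sq (Finset.range n)
    (fun i => Real.sqrt (t^i)) (fun i => Real.sqrt (t^(n-1-i)))
  have h2 : ∀ i ∈ Finset.range n, Real.sqrt (t^i) * Real.sqrt (t^(n-1-i))
      = Real.sqrt (t^(n-1)) := by
    intro i hi
    have hi' : i < n := Finset.mem_range.mp hi
    rw [← Real.sqrt_mul (pow_nonneg ht _), ← pow_add]
    have : i + (n-1-i) = n-1 := by omega
    rw [this]
  have h3 : ∀ i ∈ Finset.range n, Real.sqrt (t^i) ^ 2 = t^i := by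
    intro i _; exact Real.sq_sqrt (pow_nonneg ht _)
  have h3' : ∀ i ∈ Finset.range n, Real.sqrt (t^(n-1-i)) ^ 2 = t^(n-1-i) := by
    intro i _; exact Real.sq_sqrt (pow_nonneg ht _)
  have h4 : ∑ i ∈ Finset.range n, t^(n-1-i) = ∑ i ∈ Finset.range n, t^i :=
    Finset.sum_range_reflect (fun i => t^i) n
  rw [Finset.sum_congr rfl h2, Finset.sum_const, Finset.card_range, nsmul_eq_mul,
    Finset.sum_congr rfl h3, Finset.sum_congr rfl h3', h4, ← sq, mul_pow,
    Real.sq_sqrt (pow_nonneg ht _)] at hcs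
  exact mul_le_mul_of_nonneg_right hcs (sq_nonneg _)

theorem truncated_cone_xy_sum_le (n : ℕ) (hn : 2 ≤ n) (t : ℝ) (ht : 1 < t) :
    (t ^ (2 * n) - (n + 1) * t ^ n + n * t ^ (n - 1)) /
        ((n + 1) * (t ^ n - 1) ^ 2) +
      (n * t ^ (n + 1) - (n + 1) * t ^ n + 1) /
        ((n + 1) * (t ^ n - 1) ^ 2) ≤ 1 / n := by
  have ht0 : (0:ℝ) < t := by linarith
  have hn0 : (0:ℝ) < n := by exact_mod_cast Nat.pos_of_ne_zero (by omega)
  have htn : 1 < t ^ n := one_lt_pow₀ ht (by omega)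
  have hD : 0 < ((n:ℝ) + 1) * (t ^ n - 1) ^ 2 := by
    apply mul_pos (by positivity)
    exact pow_pos (by linarith) 2
  rw [← add_div, div_le_div_iff₀ hD hn0]
  have key := cone_key n t ht0.le
  have h2n : t ^ (2 * n) = (t ^ n) ^ 2 := by rw [pow_mul]; exact pow_right_comm t 2 n
  have hs1 : t ^ n = t ^ (n - 1) * t := by
    rw [← pow_succ]; congr 1; omega
  have hs2 : t ^ (n + 1) = t ^ (n - 1) * t ^ 2 := by
    rw [← pow_add]; congr 1; omega
  nlinarith [key, sq_nonneg (t ^ n - 1)]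
end

section
/- Let n ≥ 2 be an integer and let t ≥ 1 be a real number. Then t^(2n) − n^2·t^(n+1) + (2n^2 − 2)·t^n − n^2·t^(n−1) + 1 ≥ 0. -/
open Finset in
lemma key_cs (t : ℝ) (ht : 0 ≤ t) (n : ℕ) :
    (n : ℝ) ^ 2 * t ^ (n - 1) ≤ (∑ k ∈ range n, t ^ k) ^ 2 := by
  have h := sum_sq_le_sum_mul_sum_of_sq_eq_mul (range n)
    (r := fun _ => Real.sqrt t ^ (n - 1)) (f := fun k => t ^ k)
    (g := fun k => t ^ (n - 1 - k))
    (fun i _ => pow_nonneg ht _) (fun i _ => pow_nonneg ht _)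
    (fun i hi => by
      rw [← pow_mul, pow_mul', Real.sq_sqrt ht, ← pow_add]
      congr 1
      have := mem_range.mp hi
      omega)
  have h2 : ∑ k ∈ range n, t ^ (n - 1 - k) = ∑ k ∈ range n, t ^ k :=
    Finset.sum_range_reflect (fun k => t ^ k) n
  rw [h2, ← sq] at h
  calc (n : ℝ) ^ 2 * t ^ (n - 1) = (∑ _k ∈ range n, Real.sqrt t ^ (n - 1)) ^ 2 := by
        rw [sum_const, card_range, nsmul_eq_mul, mul_pow, ← pow_mul, pow_mul',
          Real.sq_sqrt ht]
    _ ≤ _ := h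

theorem poly_g_nonneg (n : ℕ) (hn : 2 ≤ n) (t : ℝ) (ht : 1 ≤ t) :
    t ^ (2 * n) - (n : ℝ) ^ 2 * t ^ (n + 1) + (2 * (n : ℝ) ^ 2 - 2) * t ^ n -
        (n : ℝ) ^ 2 * t ^ (n - 1) + 1 ≥ 0 := by
  obtain ⟨m, rfl⟩ : ∃ m, n = m + 1 := ⟨n - 1, by omega⟩
  have ht0 : (0:ℝ) ≤ t := le_trans zero_le_one ht
  have hgeom : (∑ k ∈ Finset.range (m + 1), t ^ k) * (t - 1) = t ^ (m + 1) - 1 :=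
    geom_sum_mul t (m + 1)
  have hkey := key_cs t ht0 (m + 1)
  simp only [Nat.add_sub_cancel] at hkey
  have hid : t ^ (2 * (m + 1)) - ((m:ℝ) + 1) ^ 2 * t ^ (m + 1 + 1) +
      (2 * ((m:ℝ) + 1) ^ 2 - 2) * t ^ (m + 1) - ((m:ℝ) + 1) ^ 2 * t ^ m + 1 =
      (t ^ (m + 1) - 1) ^ 2 - ((m:ℝ) + 1) ^ 2 * t ^ m * (t - 1) ^ 2 := by
    ring
  push_cast
  rw [hid, ← hgeom]
  have : ((m:ℝ) + 1) ^ 2 * t ^ m ≤ (∑ k ∈ Finset.range (m + 1), t ^ k) ^ 2 := by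
    push_cast at hkey; exact hkey
  nlinarith [sq_nonneg (t - 1), sq_nonneg (∑ k ∈ Finset.range (m + 1), t ^ k)]
end

section
/- Let n ≥ 2 be an integer and let t ≥ 1 be a real number. Then 2·t^(n+1) − n·(n+1)·t^2 + (2n^2 − 2)·t − n·(n−1) ≥ 0. -/
lemma bernoulli2 (m : ℕ) (x : ℝ) (hx : 0 ≤ x) :
    2 * (1 + x) ^ m ≥ 2 + 2 * (m : ℝ) * x + (m : ℝ) * ((m : ℝ) - 1) * x ^ 2 := by
  induction m with
  | zero => simp
  | succ k ih =>
    have h1 : (2 : ℝ) * (1 + x) ^ (k + 1) = (1 + x) * (2 * (1 + x) ^ k) := by ring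
    have hkk : (0:ℝ) ≤ (k:ℝ) * ((k:ℝ) - 1) := by
      rcases Nat.eq_zero_or_pos k with h | h
      · simp [h]
      · have : (1:ℝ) ≤ (k:ℝ) := by exact_mod_cast h
        nlinarith
    push_cast
    nlinarith [mul_le_mul_of_nonneg_left ih (by linarith : (0:ℝ) ≤ 1 + x),
      mul_nonneg hkk (pow_nonneg hx 3)]

theorem poly_h_nonneg (n : ℕ) (hn : 2 ≤ n) (t : ℝ) (ht : 1 ≤ t) :
    2 * t ^ (n + 1) - (n : ℝ) * ((n : ℝ) + 1) * t ^ 2 + (2 * (n : ℝ) ^ 2 - 2) * t -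
        (n : ℝ) * ((n : ℝ) - 1) ≥ 0 := by
  have hx : (0:ℝ) ≤ t - 1 := by linarith
  have h := bernoulli2 (n + 1) (t - 1) hx
  have h1 : (1 : ℝ) + (t - 1) = t := by ring
  rw [h1] at h
  push_cast at h
  nlinarith [h]
end

section
/- Let n ≥ 2 be an integer and let t > 1 be a real number. Then t^(2n) − n·t^(n+1) + n·t^(n−1) − 1 > 0. -/
theorem denominator_pos (n : ℕ) (hn : 2 ≤ n) (t : ℝ) (ht : 1 < t) :
    t ^ (2 * n) - (n : ℝ) * t ^ (n + 1) + (n : ℝ) * t ^ (n - 1) - 1 > 0 := by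
  have ht0 : (0:ℝ) < t := lt_trans one_pos ht
  set S : ℝ := ∑ i ∈ Finset.range n, t ^ (2 * i) with hS
  -- key: 2*(S - n * t^(n-1)) = ∑ (t^i - t^(n-1-i))^2
  have hkey : ∑ i ∈ Finset.range n, (t ^ i - t ^ (n - 1 - i)) ^ 2
      = 2 * S - 2 * n * t ^ (n - 1) := by
    have hterm : ∀ i ∈ Finset.range n,
        (t ^ i - t ^ (n - 1 - i)) ^ 2
          = t ^ (2 * i) + t ^ (2 * (n - 1 - i)) - 2 * t ^ (n - 1) := by
      intro i hi
      rw [Finset.mem_range] at hi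
      have h1 : i + (n - 1 - i) = n - 1 := by omega
      have h2 : t ^ (n - 1) = t ^ i * t ^ (n - 1 - i) := by
        rw [← pow_add, h1]
      have h3 : t ^ (2 * i) = (t ^ i) ^ 2 := by rw [← pow_mul, mul_comm]
      have h4 : t ^ (2 * (n - 1 - i)) = (t ^ (n - 1 - i)) ^ 2 := by
        rw [← pow_mul, mul_comm]
      rw [h2, h3, h4]; ring
    rw [Finset.sum_congr rfl hterm]
    have hrefl : ∑ i ∈ Finset.range n, t ^ (2 * (n - 1 - i))
        = ∑ i ∈ Finset.range n, t ^ (2 * i) := by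
      rw [← Finset.sum_range_reflect]
      apply Finset.sum_congr rfl
      intro i hi
      rw [Finset.mem_range] at hi
      congr 2
      omega
    rw [Finset.sum_sub_distrib, Finset.sum_add_distrib, hrefl, Finset.sum_const,
      Finset.card_range, nsmul_eq_mul]
    push_cast
    ring
  have hpos : 0 < ∑ i ∈ Finset.range n, (t ^ i - t ^ (n - 1 - i)) ^ 2 := by
    apply Finset.sum_pos'
    · intro i _; positivity
    · refine ⟨0, Finset.mem_range.mpr (by omega), ?_⟩
      have h1 : (1:ℝ) < t ^ (n - 1 - 0) :=
        one_lt_pow₀ ht (by omega)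
      nlinarith [h1]
  have hSgt : (n : ℝ) * t ^ (n - 1) < S := by
    rw [hkey] at hpos; linarith
  have hgeom : t ^ (2 * n) - 1 = (t ^ 2 - 1) * S := by
    have h := geom_sum_mul (t ^ 2) n
    have hsum : ∑ i ∈ Finset.range n, (t ^ 2) ^ i = S := by
      apply Finset.sum_congr rfl; intro i _; rw [← pow_mul]
    rw [hsum, ← pow_mul] at h
    rw [← h]; ring
  have hnp : t ^ (n + 1) = t ^ (n - 1) * t ^ 2 := by
    rw [← pow_add]; congr 1; omega
  have ht2 : (0:ℝ) < t ^ 2 - 1 := by nlinarith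
  have : t ^ (2 * n) - (n : ℝ) * t ^ (n + 1) + (n : ℝ) * t ^ (n - 1) - 1
      = (t ^ 2 - 1) * (S - (n : ℝ) * t ^ (n - 1)) := by
    rw [hnp]; nlinarith [hgeom]
  rw [this]
  exact mul_pos ht2 (by linarith)
end

section
/- Let n ≥ 3 be an integer and let t > 1 be a real number. Then (t^n − 1)^(2n) − n^2·t^(n−1)·(t − 1)^2·(t^n − 1)^(2n−2) > (t^(2n) − n·t^(n+1) + n·t^(n−1) − 1)^n. -/
open Finset

private lemma sum_one (t : ℝ) (m : ℕ) :
    (t - 1) ^ 2 * ∑ j ∈ range m, ((j : ℝ) + 1) * t ^ j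
      = (m : ℝ) * t ^ (m + 1) - ((m : ℝ) + 1) * t ^ m + 1 := by
  induction m with
  | zero => simp
  | succ m ih =>
    rw [sum_range_succ, mul_add, ih]
    push_cast
    ring

private lemma sum_two (t : ℝ) (m : ℕ) :
    (t - 1) ^ 2 * ∑ j ∈ range m, ((m : ℝ) - (j : ℝ)) * t ^ j
      = t ^ (m + 1) - ((m : ℝ) + 1) * t + (m : ℝ) := by
  induction m with
  | zero => simp
  | succ m ih =>
    have h1 : ∀ j ∈ range (m + 1),
        (((m + 1 : ℕ) : ℝ) - (j : ℝ)) * t ^ j = ((m : ℝ) - (j : ℝ)) * t ^ j + t ^ j := by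
      intro j _; push_cast; ring
    have hg : (∑ j ∈ range (m + 1), t ^ j) * (t - 1) = t ^ (m + 1) - 1 := geom_sum_mul t (m + 1)
    rw [sum_congr rfl h1, sum_add_distrib, sum_range_succ (fun j => ((m : ℝ) - (j : ℝ)) * t ^ j)]
    push_cast
    linear_combination ih + (t - 1) * hg

private lemma gauss_sum (m : ℕ) :
    (∑ j ∈ range m, ((m : ℝ) - (j : ℝ))) = (m : ℝ) * ((m : ℝ) + 1) / 2 := by
  induction m with
  | zero => simp
  | succ m ih =>
    have h1 : ∀ j ∈ range (m + 1),
        (((m + 1 : ℕ) : ℝ) - (j : ℝ)) = ((m : ℝ) - (j : ℝ)) + 1 := by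
      intro j _; push_cast; ring
    rw [sum_congr rfl h1, sum_add_distrib, sum_range_succ (fun j => ((m : ℝ) - (j : ℝ))),
      sum_const, card_range, nsmul_eq_mul]
    push_cast
    linear_combination ih

private lemma reflect_sum (t : ℝ) (m : ℕ) :
    ∑ j ∈ range (m + 2), ((m : ℝ) + 2 - (j : ℝ)) * t ^ (m + 1 - j)
      = ∑ j ∈ range (m + 2), ((j : ℝ) + 1) * t ^ j := by
  rw [← sum_range_reflect (fun j => ((j : ℝ) + 1) * t ^ j) (m + 2)]
  apply sum_congr rfl
  intro j hj
  have hj' : j ≤ m + 1 := by have := mem_range.mp hj; omega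
  have h1 : m + 2 - 1 - j = m + 1 - j := by omega
  have h2 : ((m + 1 - j : ℕ) : ℝ) = (m : ℝ) + 1 - (j : ℝ) := by
    rw [Nat.cast_sub (by omega : j ≤ m + 1)]; push_cast; ring
  simp only [h1, h2]
  ring

private lemma decompP (t : ℝ) (m : ℕ) :
    (t - 1) ^ 2 * ∑ j ∈ range (m + 2), ((m : ℝ) + 2 - (j : ℝ)) * (t ^ (j + 1) - 1) ^ 2 * t ^ (m + 1 - j)
      = (t ^ (m + 3) - 1) ^ 2 - ((m : ℝ) + 3) ^ 2 * t ^ (m + 2) * (t - 1) ^ 2 := by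
  have key : ∀ j ∈ range (m + 2),
      ((m : ℝ) + 2 - (j : ℝ)) * (t ^ (j + 1) - 1) ^ 2 * t ^ (m + 1 - j)
        = t ^ (m + 3) * ((((m + 2 : ℕ) : ℝ) - (j : ℝ)) * t ^ j)
          - 2 * t ^ (m + 2) * (((m + 2 : ℕ) : ℝ) - (j : ℝ))
          + ((m : ℝ) + 2 - (j : ℝ)) * t ^ (m + 1 - j) := by
    intro j hj
    have hj' : j < m + 2 := mem_range.mp hj
    have e1 : t ^ (j + 1) * t ^ (j + 1) * t ^ (m + 1 - j) = t ^ (m + 3) * t ^ j := by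
      rw [← pow_add, ← pow_add, ← pow_add]; congr 1; omega
    have e2 : t ^ (j + 1) * t ^ (m + 1 - j) = t ^ (m + 2) := by
      rw [← pow_add]; congr 1; omega
    push_cast
    linear_combination ((m : ℝ) + 2 - (j : ℝ)) * e1 - 2 * ((m : ℝ) + 2 - (j : ℝ)) * e2
  rw [sum_congr rfl key, sum_add_distrib, sum_sub_distrib, ← mul_sum, ← mul_sum, reflect_sum]
  have hA := sum_one t (m + 2)
  have hB := sum_two t (m + 2)
  have hG := gauss_sum (m + 2)
  push_cast at hA hB hG ⊢
  linear_combination t ^ (m + 3) * hB + hA - 2 * t ^ (m + 2) * (t - 1) ^ 2 * hG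

private lemma decompQ (t : ℝ) (m : ℕ) :
    (t - 1) ^ 2 * ∑ j ∈ range (m + 2), ((m : ℝ) + 2 - (j : ℝ)) * (t ^ (j + 1) + 1) ^ 2 * t ^ (m + 1 - j)
      = (t ^ (m + 3) - 1) ^ 2 + (((m : ℝ) + 3) ^ 2 - 2 * ((m : ℝ) + 3)) * t ^ (m + 2) * (t - 1) ^ 2 := by
  have key : ∀ j ∈ range (m + 2),
      ((m : ℝ) + 2 - (j : ℝ)) * (t ^ (j + 1) + 1) ^ 2 * t ^ (m + 1 - j)
        = t ^ (m + 3) * ((((m + 2 : ℕ) : ℝ) - (j : ℝ)) * t ^ j)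
          + 2 * t ^ (m + 2) * (((m + 2 : ℕ) : ℝ) - (j : ℝ))
          + ((m : ℝ) + 2 - (j : ℝ)) * t ^ (m + 1 - j) := by
    intro j hj
    have hj' : j < m + 2 := mem_range.mp hj
    have e1 : t ^ (j + 1) * t ^ (j + 1) * t ^ (m + 1 - j) = t ^ (m + 3) * t ^ j := by
      rw [← pow_add, ← pow_add, ← pow_add]; congr 1; omega
    have e2 : t ^ (j + 1) * t ^ (m + 1 - j) = t ^ (m + 2) := by
      rw [← pow_add]; congr 1; omega
    push_cast
    linear_combination ((m : ℝ) + 2 - (j : ℝ)) * e1 + 2 * ((m : ℝ) + 2 - (j : ℝ)) * e2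
  rw [sum_congr rfl key, sum_add_distrib, sum_add_distrib, ← mul_sum, ← mul_sum, reflect_sum]
  have hA := sum_one t (m + 2)
  have hB := sum_two t (m + 2)
  have hG := gauss_sum (m + 2)
  push_cast at hA hB hG ⊢
  linear_combination t ^ (m + 3) * hB + hA + 2 * t ^ (m + 2) * (t - 1) ^ 2 * hG

private lemma decompM (t : ℝ) (m : ℕ) :
    (t - 1) ^ 2 * ∑ j ∈ range (m + 2),
        ((m : ℝ) + 2 - (j : ℝ)) * ((t ^ (j + 1) - 1) * (t ^ (j + 1) + 1)) * t ^ (m + 1 - j)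
      = t ^ (2 * m + 6) - ((m : ℝ) + 3) * t ^ (m + 4) + ((m : ℝ) + 3) * t ^ (m + 2) - 1 := by
  have key : ∀ j ∈ range (m + 2),
      ((m : ℝ) + 2 - (j : ℝ)) * ((t ^ (j + 1) - 1) * (t ^ (j + 1) + 1)) * t ^ (m + 1 - j)
        = t ^ (m + 3) * ((((m + 2 : ℕ) : ℝ) - (j : ℝ)) * t ^ j)
          - ((m : ℝ) + 2 - (j : ℝ)) * t ^ (m + 1 - j) := by
    intro j hj
    have hj' : j < m + 2 := mem_range.mp hj
    have e1 : t ^ (j + 1) * t ^ (j + 1) * t ^ (m + 1 - j) = t ^ (m + 3) * t ^ j := by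
      rw [← pow_add, ← pow_add, ← pow_add]; congr 1; omega
    push_cast
    linear_combination ((m : ℝ) + 2 - (j : ℝ)) * e1
  rw [sum_congr rfl key, sum_sub_distrib, ← mul_sum, reflect_sum]
  have hA := sum_one t (m + 2)
  have hB := sum_two t (m + 2)
  push_cast at hA hB ⊢
  linear_combination t ^ (m + 3) * hB - hA

private lemma amgm3 (x y z : ℝ) (hx : 0 ≤ x) (hy : 0 ≤ y) (hz : 0 ≤ z)
    (a b c : ℕ) (hN : 0 < a + b + c) :
    x ^ a * y ^ b * z ^ c
      ≤ (((a : ℝ) * x + (b : ℝ) * y + (c : ℝ) * z) / ((a : ℝ) + (b : ℝ) + (c : ℝ))) ^ (a + b + c) := by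
  have hN0 : (0 : ℝ) < (a : ℝ) + (b : ℝ) + (c : ℝ) := by exact_mod_cast hN
  set N : ℝ := (a : ℝ) + (b : ℝ) + (c : ℝ) with hNdef
  have hw : (a : ℝ) / N + (b : ℝ) / N + (c : ℝ) / N = 1 := by field_simp; exact hNdef.symm
  have hgm := Real.geom_mean_le_arith_mean3_weighted
    (by positivity) (by positivity) (by positivity) hx hy hz hw
  have hmean : (a : ℝ) / N * x + (b : ℝ) / N * y + (c : ℝ) / N * z
      = ((a : ℝ) * x + (b : ℝ) * y + (c : ℝ) * z) / N := by ring
  rw [hmean] at hgm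
  have hbase : (0 : ℝ) ≤ x ^ ((a : ℝ) / N) * y ^ ((b : ℝ) / N) * z ^ ((c : ℝ) / N) := by
    positivity
  have h2 := pow_le_pow_left₀ hbase hgm (a + b + c)
  have hcast : ((a + b + c : ℕ) : ℝ) = N := by push_cast [hNdef]; ring
  have hxp : (x ^ ((a : ℝ) / N)) ^ (a + b + c) = x ^ a := by
    rw [← Real.rpow_natCast (x ^ ((a : ℝ) / N)) (a + b + c), ← Real.rpow_mul hx, hcast,
      div_mul_cancel₀ _ (ne_of_gt hN0), Real.rpow_natCast]
  have hyp : (y ^ ((b : ℝ) / N)) ^ (a + b + c) = y ^ b := by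
    rw [← Real.rpow_natCast (y ^ ((b : ℝ) / N)) (a + b + c), ← Real.rpow_mul hy, hcast,
      div_mul_cancel₀ _ (ne_of_gt hN0), Real.rpow_natCast]
  have hzp : (z ^ ((c : ℝ) / N)) ^ (a + b + c) = z ^ c := by
    rw [← Real.rpow_natCast (z ^ ((c : ℝ) / N)) (a + b + c), ← Real.rpow_mul hz, hcast,
      div_mul_cancel₀ _ (ne_of_gt hN0), Real.rpow_natCast]
  calc x ^ a * y ^ b * z ^ c
      = (x ^ ((a : ℝ) / N) * y ^ ((b : ℝ) / N) * z ^ ((c : ℝ) / N)) ^ (a + b + c) := by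
        rw [mul_pow, mul_pow, hxp, hyp, hzp]
    _ ≤ _ := h2

set_option maxHeartbeats 1000000 in
theorem key_inequality_strict (n : ℕ) (hn : 3 ≤ n) (t : ℝ) (ht : 1 < t) :
    (t ^ n - 1) ^ (2 * n) -
        (n : ℝ) ^ 2 * t ^ (n - 1) * (t - 1) ^ 2 * (t ^ n - 1) ^ (2 * n - 2) >
      (t ^ (2 * n) - (n : ℝ) * t ^ (n + 1) + (n : ℝ) * t ^ (n - 1) - 1) ^ n := by
  obtain ⟨m, rfl⟩ : ∃ m, n = m + 3 := ⟨n - 3, by omega⟩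
  have ht0 : (0 : ℝ) < t := lt_trans one_pos ht
  have ht1 : (0 : ℝ) < t - 1 := sub_pos.2 ht
  -- normalize the natural-number exponents and casts
  have e1 : m + 3 - 1 = m + 2 := by omega
  have e2 : 2 * (m + 3) - 2 = 2 * m + 4 := by omega
  have e3 : 2 * (m + 3) = 2 * m + 6 := by omega
  rw [e1, e2, e3]
  push_cast
  -- abbreviations
  obtain ⟨A, hAdef⟩ : ∃ x : ℝ, x = (t ^ (m + 3) - 1) ^ 2 := ⟨_, rfl⟩
  obtain ⟨U, hUdef⟩ : ∃ x : ℝ,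
      x = (t ^ (m + 3) - 1) ^ 2 - ((m : ℝ) + 3) ^ 2 * t ^ (m + 2) * (t - 1) ^ 2 := ⟨_, rfl⟩
  obtain ⟨V, hVdef⟩ : ∃ x : ℝ, x = (t ^ (m + 3) - 1) ^ 2
      + (((m : ℝ) + 3) ^ 2 - 2 * ((m : ℝ) + 3)) * t ^ (m + 2) * (t - 1) ^ 2 := ⟨_, rfl⟩
  obtain ⟨C, hCdef⟩ : ∃ x : ℝ,
      x = t ^ (2 * m + 6) - ((m : ℝ) + 3) * t ^ (m + 4) + ((m : ℝ) + 3) * t ^ (m + 2) - 1 := ⟨_, rfl⟩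
  obtain ⟨P, hPdef⟩ : ∃ x : ℝ, x = ∑ j ∈ range (m + 2),
      ((m : ℝ) + 2 - (j : ℝ)) * (t ^ (j + 1) - 1) ^ 2 * t ^ (m + 1 - j) := ⟨_, rfl⟩
  obtain ⟨Q, hQdef⟩ : ∃ x : ℝ, x = ∑ j ∈ range (m + 2),
      ((m : ℝ) + 2 - (j : ℝ)) * (t ^ (j + 1) + 1) ^ 2 * t ^ (m + 1 - j) := ⟨_, rfl⟩
  obtain ⟨Mm, hMdef⟩ : ∃ x : ℝ, x = ∑ j ∈ range (m + 2),
      ((m : ℝ) + 2 - (j : ℝ)) * ((t ^ (j + 1) - 1) * (t ^ (j + 1) + 1)) * t ^ (m + 1 - j) := ⟨_, rfl⟩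
  have hwpos : ∀ j ∈ range (m + 2), (0 : ℝ) < (m : ℝ) + 2 - (j : ℝ) := by
    intro j hj
    have hj' : j ≤ m + 1 := by have := mem_range.mp hj; omega
    have : (j : ℝ) ≤ (m : ℝ) + 1 := by exact_mod_cast hj'
    linarith
  -- Cauchy-Schwarz : Mm^2 ≤ P * Q
  have hCS : Mm ^ 2 ≤ P * Q := by
    have h := sum_mul_sq_le_sq_mul_sq (range (m + 2))
      (fun j => Real.sqrt (((m : ℝ) + 2 - (j : ℝ)) * t ^ (m + 1 - j)) * (t ^ (j + 1) - 1))
      (fun j => Real.sqrt (((m : ℝ) + 2 - (j : ℝ)) * t ^ (m + 1 - j)) * (t ^ (j + 1) + 1))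
    have hs : ∀ j ∈ range (m + 2), (0 : ℝ) ≤ ((m : ℝ) + 2 - (j : ℝ)) * t ^ (m + 1 - j) := by
      intro j hj
      exact mul_nonneg (le_of_lt (hwpos j hj)) (le_of_lt (pow_pos ht0 _))
    have hfg : ∀ j ∈ range (m + 2),
        (Real.sqrt (((m : ℝ) + 2 - (j : ℝ)) * t ^ (m + 1 - j)) * (t ^ (j + 1) - 1)) *
          (Real.sqrt (((m : ℝ) + 2 - (j : ℝ)) * t ^ (m + 1 - j)) * (t ^ (j + 1) + 1))
          = ((m : ℝ) + 2 - (j : ℝ)) * ((t ^ (j + 1) - 1) * (t ^ (j + 1) + 1)) * t ^ (m + 1 - j) := by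
      intro j hj
      have h0 := Real.mul_self_sqrt (hs j hj)
      linear_combination ((t ^ (j + 1) - 1) * (t ^ (j + 1) + 1)) * h0
    have hf2 : ∀ j ∈ range (m + 2),
        (Real.sqrt (((m : ℝ) + 2 - (j : ℝ)) * t ^ (m + 1 - j)) * (t ^ (j + 1) - 1)) ^ 2
          = ((m : ℝ) + 2 - (j : ℝ)) * (t ^ (j + 1) - 1) ^ 2 * t ^ (m + 1 - j) := by
      intro j hj
      have h0 := Real.sq_sqrt (hs j hj)
      linear_combination (t ^ (j + 1) - 1) ^ 2 * h0
    have hg2 : ∀ j ∈ range (m + 2),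
        (Real.sqrt (((m : ℝ) + 2 - (j : ℝ)) * t ^ (m + 1 - j)) * (t ^ (j + 1) + 1)) ^ 2
          = ((m : ℝ) + 2 - (j : ℝ)) * (t ^ (j + 1) + 1) ^ 2 * t ^ (m + 1 - j) := by
      intro j hj
      have h0 := Real.sq_sqrt (hs j hj)
      linear_combination (t ^ (j + 1) + 1) ^ 2 * h0
    rw [sum_congr rfl hfg, sum_congr rfl hf2, sum_congr rfl hg2] at h
    rw [hPdef, hQdef, hMdef]
    exact h
  have hU_eq : (t - 1) ^ 2 * P = U := by rw [hPdef, hUdef]; exact decompP t m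
  have hV_eq : (t - 1) ^ 2 * Q = V := by rw [hQdef, hVdef]; exact decompQ t m
  have hM_eq : (t - 1) ^ 2 * Mm = C := by rw [hMdef, hCdef]; exact decompM t m
  have hPpos : 0 < P := by
    rw [hPdef]
    apply sum_pos
    · intro j hj
      have h1 : (1 : ℝ) < t ^ (j + 1) := one_lt_pow₀ ht (by omega)
      have h1' : (0 : ℝ) < t ^ (j + 1) - 1 := by linarith
      have : (0 : ℝ) < (t ^ (j + 1) - 1) ^ 2 := pow_pos h1' 2
      exact mul_pos (mul_pos (hwpos j hj) this) (pow_pos ht0 _)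
    · exact nonempty_range_iff.mpr (by omega)
  have hUpos : 0 < U := by rw [← hU_eq]; exact mul_pos (pow_pos ht1 2) hPpos
  have hUV : U < V := by
    have key : (0 : ℝ) < t ^ (m + 2) * (t - 1) ^ 2 := by positivity
    have hm : (0 : ℝ) ≤ (m : ℝ) := Nat.cast_nonneg m
    have hd : V - U = (2 * ((m : ℝ) + 3) ^ 2 - 2 * ((m : ℝ) + 3)) * (t ^ (m + 2) * (t - 1) ^ 2) := by
      rw [hUdef, hVdef]; ring
    have hcoef : (0 : ℝ) < 2 * ((m : ℝ) + 3) ^ 2 - 2 * ((m : ℝ) + 3) := by nlinarith [hm]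
    nlinarith [mul_pos hcoef key, hd]
  have hVpos : 0 < V := lt_trans hUpos hUV
  -- C^2 ≤ U * V
  have hC2 : C ^ 2 ≤ U * V := by
    calc C ^ 2 = (t - 1) ^ 4 * Mm ^ 2 := by rw [← hM_eq]; ring
      _ ≤ (t - 1) ^ 4 * (P * Q) := by
          apply mul_le_mul_of_nonneg_left hCS (by positivity)
      _ = ((t - 1) ^ 2 * P) * ((t - 1) ^ 2 * Q) := by ring
      _ = U * V := by rw [hU_eq, hV_eq]
  -- AM-GM
  obtain ⟨W, hWdef⟩ : ∃ x : ℝ, x = (U + V) / 2 := ⟨_, rfl⟩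
  have hWpos : 0 < W := by rw [hWdef]; linarith
  have hAM := amgm3 W U V hWpos.le hUpos.le hVpos.le 2 m (m + 2) (by omega)
  have hApos : 0 < A := by
    have h3 : (1 : ℝ) < t ^ (m + 3) := one_lt_pow₀ ht (by omega)
    have : (0 : ℝ) < t ^ (m + 3) - 1 := by linarith
    rw [hAdef]; positivity
  have hmean : (((2 : ℕ) : ℝ) * W + ((m : ℕ) : ℝ) * U + (((m + 2 : ℕ)) : ℝ) * V)
      / (((2 : ℕ) : ℝ) + ((m : ℕ) : ℝ) + (((m + 2 : ℕ)) : ℝ)) = A := by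
    push_cast
    rw [div_eq_iff (by positivity)]
    rw [hWdef, hUdef, hVdef, hAdef]
    ring
  rw [hmean] at hAM
  have hexp : 2 + m + (m + 2) = 2 * m + 4 := by omega
  rw [hexp] at hAM
  -- strict step
  have h1 : U * V < W ^ 2 := by
    have hVU : (0 : ℝ) < V - U := sub_pos.2 hUV
    have h0 : (0 : ℝ) < (V - U) ^ 2 := pow_pos hVU 2
    have hid : W ^ 2 - U * V = (V - U) ^ 2 / 4 := by rw [hWdef]; ring
    linarith [h0, hid]
  have hstep : U ^ (m + 1) * V ^ (m + 3) < A ^ (2 * m + 4) := by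
    calc U ^ (m + 1) * V ^ (m + 3) = (U * V) * (U ^ m * V ^ (m + 2)) := by ring
      _ < W ^ 2 * (U ^ m * V ^ (m + 2)) := by
          exact mul_lt_mul_of_pos_right h1 (mul_pos (pow_pos hUpos m) (pow_pos hVpos (m + 2)))
      _ = W ^ 2 * U ^ m * V ^ (m + 2) := by ring
      _ ≤ A ^ (2 * m + 4) := hAM
  have hsq : (C ^ (m + 3)) ^ 2 < (A ^ (m + 2) * U) ^ 2 := by
    calc (C ^ (m + 3)) ^ 2 = (C ^ 2) ^ (m + 3) := by ring
      _ ≤ (U * V) ^ (m + 3) := pow_le_pow_left₀ (sq_nonneg C) hC2 (m + 3)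
      _ = U ^ 2 * (U ^ (m + 1) * V ^ (m + 3)) := by ring
      _ < U ^ 2 * A ^ (2 * m + 4) := by
          exact mul_lt_mul_of_pos_left hstep (pow_pos hUpos 2)
      _ = (A ^ (m + 2) * U) ^ 2 := by ring
  have hfin : C ^ (m + 3) < A ^ (m + 2) * U := by
    exact lt_of_pow_lt_pow_left₀ 2 (le_of_lt (mul_pos (pow_pos hApos (m + 2)) hUpos)) hsq
  calc (t ^ (2 * m + 6) - ((m : ℝ) + 3) * t ^ (m + 3 + 1) + ((m : ℝ) + 3) * t ^ (m + 2) - 1) ^ (m + 3)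
      = C ^ (m + 3) := by rw [hCdef]
    _ < A ^ (m + 2) * U := hfin
    _ = (t ^ (m + 3) - 1) ^ (2 * m + 6)
        - ((m : ℝ) + 3) ^ 2 * t ^ (m + 2) * (t - 1) ^ 2 * (t ^ (m + 3) - 1) ^ (2 * m + 4) := by
      have p1 : (t ^ (m + 3) - 1) ^ (2 * m + 6) = A ^ (m + 3) := by
        rw [hAdef, ← pow_mul]; congr 1 <;> omega
      have p2 : (t ^ (m + 3) - 1) ^ (2 * m + 4) = A ^ (m + 2) := by
        rw [hAdef, ← pow_mul]; congr 1 <;> omega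
      rw [p1, p2, hUdef, ← hAdef]
      ring
end

section
/- Let n ≥ 3 be an integer and let t > 1 be a real number. Set x(t) = (t^(2n) − (n+1)·t^n + n·t^(n−1)) / ((n+1)·(t^n − 1)^2) and y(t) = (n·t^(n+1) − (n+1)·t^n + 1) / ((n+1)·(t^n − 1)^2). Then n·(x(t) + y(t)) + (n+1)^(n−1)·(x(t) − y(t))^n ≤ 1. -/
set_option maxHeartbeats 1000000

open Finset

/-- Gauss sum. -/
lemma gauss_aux : ∀ M : ℕ, ∑ m ∈ Finset.range M, ((m : ℝ) + 1) = M * (M + 1) / 2 := by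
  intro M
  induction M with
  | zero => simp
  | succ M ih =>
    rw [Finset.sum_range_succ, ih]
    push_cast
    ring

/-- Derivative-style weighted geometric sum. -/
lemma sumV_aux (t : ℝ) : ∀ M : ℕ, (t - 1) * ∑ m ∈ Finset.range M, ((m : ℝ) + 1) * t ^ m
    = M * t ^ M - ∑ i ∈ Finset.range M, t ^ i := by
  intro M
  induction M with
  | zero => simp
  | succ M ih =>
    rw [Finset.sum_range_succ, Finset.sum_range_succ (f := fun i => t ^ i)]
    push_cast
    linear_combination ih

/-- AM-GM style induction: `(P-R)^m (P + mR) ≤ P^(m+1)`. -/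
lemma amgm_aux (P R : ℝ) (hR : 0 ≤ R) (hPR : R ≤ P) :
    ∀ m : ℕ, (P - R) ^ m * (P + m * R) ≤ P ^ (m + 1) := by
  intro m
  have hP : 0 ≤ P := le_trans hR hPR
  induction m with
  | zero => simp
  | succ m ih =>
    have h1 : (P - R) ^ (m + 1) * (P + (↑(m + 1)) * R)
        = (P - R) ^ m * ((P - R) * (P + (↑(m + 1)) * R)) := by ring
    have h2 : (P - R) * (P + (↑(m + 1)) * R) ≤ P * (P + m * R) := by
      push_cast
      nlinarith [sq_nonneg R, mul_nonneg (Nat.cast_nonneg (α := ℝ) m) (sq_nonneg R)]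
    have h3 : (P - R) ^ m * ((P - R) * (P + (↑(m + 1)) * R)) ≤ (P - R) ^ m * (P * (P + m * R)) :=
      mul_le_mul_of_nonneg_left h2 (pow_nonneg (by linarith) m)
    have h4 : (P - R) ^ m * (P * (P + m * R)) = P * ((P - R) ^ m * (P + m * R)) := by ring
    have h5 : P * ((P - R) ^ m * (P + m * R)) ≤ P * P ^ (m + 1) :=
      mul_le_mul_of_nonneg_left ih hP
    calc (P - R) ^ (m + 1) * (P + (↑(m + 1)) * R)
        = (P - R) ^ m * ((P - R) * (P + (↑(m + 1)) * R)) := h1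
      _ ≤ (P - R) ^ m * (P * (P + m * R)) := h3
      _ = P * ((P - R) ^ m * (P + m * R)) := h4
      _ ≤ P * P ^ (m + 1) := h5
      _ = P ^ (m + 1 + 1) := by ring

theorem truncated_cone_necessary (n : ℕ) (hn : 3 ≤ n) (t : ℝ) (ht : 1 < t)
    (x y : ℝ)
    (hx : x = (t ^ (2 * n) - (n + 1) * t ^ n + n * t ^ (n - 1)) /
      ((n + 1) * (t ^ n - 1) ^ 2))
    (hy : y = (n * t ^ (n + 1) - (n + 1) * t ^ n + 1) /
      ((n + 1) * (t ^ n - 1) ^ 2)) :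
    n * (x + y) + (n + 1) ^ (n - 1) * (x - y) ^ n ≤ 1 := by
  obtain ⟨j, rfl⟩ : ∃ j, n = j + 2 := ⟨n - 2, by omega⟩
  have hj1 : 1 ≤ j := by omega
  clear hn
  have ht0 : (0:ℝ) < t := by linarith
  have ht1 : (0:ℝ) < t - 1 := by linarith
  have hne : t - 1 ≠ 0 := ne_of_gt ht1
  have hexp1 : j + 2 - 1 = j + 1 := by omega
  rw [hexp1] at hx ⊢
  -- sums
  set B : ℝ := ∑ i ∈ Finset.range (j+2), t^i with hBdef
  set C : ℝ := ∑ i ∈ Finset.range (j+1), t^i with hCdef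
  set V : ℝ := ∑ m ∈ Finset.range (j+1), ((m:ℝ)+1)*t^m with hVdef
  set Wt : ℝ := ∑ m ∈ Finset.range (j+1), ((m:ℝ)+1)*t^(2*(j+1)-m) with hWdef
  set u : ℝ := t^(j+1) with hu
  clear_value B C V Wt u
  have hu0 : (0:ℝ) < u := by rw [hu]; positivity
  have hu1 : (1:ℝ) ≤ u := by rw [hu]; exact one_le_pow₀ ht.le
  have hut : (1:ℝ) < u * t := by nlinarith
  have hV0 : (0:ℝ) ≤ V := by
    rw [hVdef]
    apply Finset.sum_nonneg
    intro m _
    positivity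
  -- closed forms
  have hp2 : t^(j+2) = u*t := by rw [hu]; ring
  have f1 : (t-1)*B = u*t - 1 := by
    have h := geom_sum_mul t (j+2)
    rw [← hBdef] at h
    linear_combination h + hp2
  have f2 : (t-1)*C = u - 1 := by
    have h := geom_sum_mul t (j+1)
    rw [← hCdef, ← hu] at h
    linear_combination h
  have f3 : (t-1)*V = ((j:ℝ)+1)*u - C := by
    have h := sumV_aux t (j+1)
    rw [← hCdef, ← hVdef, ← hu] at h
    push_cast at h
    linear_combination h
  have hBv : B = (u*t-1)/(t-1) := by rw [eq_div_iff hne]; linear_combination f1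
  have hCv : C = (u-1)/(t-1) := by rw [eq_div_iff hne]; linear_combination f2
  have hVv : V = (((j:ℝ)+1)*u - C)/(t-1) := by rw [eq_div_iff hne]; linear_combination f3
  -- reflection identity for Wt
  have f4 : Wt = u*t*(((j:ℝ)+2)*C - V) := by
    have rhs1 : ((j:ℝ)+2)*C - V
        = ∑ m ∈ Finset.range (j+1), (((j:ℝ)+2)*t^m - ((m:ℝ)+1)*t^m) := by
      rw [Finset.sum_sub_distrib, ← Finset.mul_sum, ← hCdef, ← hVdef]
    rw [hWdef, ← Finset.sum_range_reflect, rhs1, Finset.mul_sum]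
    apply Finset.sum_congr rfl
    intro m hm
    rw [Finset.mem_range] at hm
    have hm' : m ≤ j := by omega
    have e1 : j + 1 - 1 - m = j - m := by omega
    have e2 : 2*(j+1) - (j - m) = j + 2 + m := by omega
    rw [e1, e2, Nat.cast_sub hm']
    rw [hu]
    ring
  -- Cauchy–Schwarz
  have f5 : (((j:ℝ)+1)*((j:ℝ)+2)/2*u)^2 ≤ V * Wt := by
    have cs := Finset.sum_sq_le_sum_mul_sum_of_sq_eq_mul (Finset.range (j+1))
      (r := fun m => ((m:ℝ)+1)*u) (f := fun m => ((m:ℝ)+1)*t^m)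
      (g := fun m => ((m:ℝ)+1)*t^(2*(j+1)-m))
      (by intro i _; positivity) (by intro i _; positivity)
      (by
        intro i hi
        rw [Finset.mem_range] at hi
        have e : i + (2*(j+1) - i) = 2*(j+1) := by omega
        have h2 : t^i * t^(2*(j+1)-i) = u^2 := by
          rw [← pow_add, e, hu, ← pow_mul]
          congr 1
          omega
        rw [mul_mul_mul_comm, h2, hu]
        ring)
    rw [← hVdef, ← hWdef] at cs
    have hr : ∑ m ∈ Finset.range (j+1), ((m:ℝ)+1)*u
        = ((j:ℝ)+1)*((j:ℝ)+2)/2*u := by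
      rw [← Finset.sum_mul, gauss_aux (j+1)]
      push_cast
      ring
    rw [hr] at cs
    exact cs
  -- termwise comparison
  have f6 : V ≤ Wt := by
    rw [hVdef, hWdef]
    apply Finset.sum_le_sum
    intro m hm
    rw [Finset.mem_range] at hm
    have h1 : t ^ m ≤ t ^ (2*(j+1) - m) := pow_le_pow_right₀ ht.le (by omega)
    have h2 : (0:ℝ) ≤ (m:ℝ) + 1 := by positivity
    exact mul_le_mul_of_nonneg_left h1 h2
  -- square of geometric sum identity
  have f7 : B^2 = V + ((j:ℝ)+2)*u + Wt := by
    rw [f4, hBv, hVv, hCv]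
    field_simp
    ring
  -- main quantities
  set S : ℝ := u^2*t^2 - 1 - ((j:ℝ)+2)*u*(t^2-1) with hSdef
  set P : ℝ := (u*t-1)^2 with hPdef
  set R : ℝ := ((j:ℝ)+2)*u*(t^2-1) - 2*(u*t-1) with hRdef
  set W2 : ℝ := ((j:ℝ)+2)*u*(t-1) - (u*t-1) with hW2def
  set Q : ℝ := (u*t-1)^2 - ((j:ℝ)+2)^2*u*(t-1)^2 with hQdef
  clear_value S P R W2 Q
  have g1 : P = (t-1)^2*B^2 := by rw [hPdef, hBv]; field_simp
  have g2 : R = (t-1)^2*(2*V + ((j:ℝ)+2)*u) := by rw [hRdef, hVv, hCv]; field_simp; ring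
  have g3 : W2 = (t-1)^2*V := by rw [hW2def, hVv, hCv]; field_simp; ring
  -- key quadratic inequality (★★)
  have hstar : ((j:ℝ)+1)^2*(2*V + ((j:ℝ)+2)*u)^2
      ≤ 2*((j:ℝ)+2)*V*(B^2 + (j:ℝ)*(2*V + ((j:ℝ)+2)*u)) := by
    rw [f7]
    have h1 : (0:ℝ) ≤ (j:ℝ) * (2*V - ((j:ℝ)+1)*((j:ℝ)+2)*u)^2 :=
      mul_nonneg (by positivity) (sq_nonneg _)
    have h2 : (0:ℝ) ≤ 2*((j:ℝ)+2) * (V*Wt - (((j:ℝ)+1)*((j:ℝ)+2)/2*u)^2) :=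
      mul_nonneg (by positivity) (sub_nonneg.mpr f5)
    have hid : 2*((j:ℝ)+2)*V*((V + ((j:ℝ)+2)*u + Wt) + (j:ℝ)*(2*V + ((j:ℝ)+2)*u))
        - ((j:ℝ)+1)^2*(2*V + ((j:ℝ)+2)*u)^2
        = (1/2)*((j:ℝ) * (2*V - ((j:ℝ)+1)*((j:ℝ)+2)*u)^2)
          + 2*((j:ℝ)+2) * (V*Wt - (((j:ℝ)+1)*((j:ℝ)+2)/2*u)^2) := by ring
    linarith [h1, h2, hid]
  have hd : ((j:ℝ)+1)^2*R^2 ≤ 2*((j:ℝ)+2)*W2*(P + (j:ℝ)*R) := by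
    rw [g1, g2, g3]
    calc ((j:ℝ)+1)^2*((t-1)^2*(2*V + ((j:ℝ)+2)*u))^2
        = ((t-1)^2)^2*(((j:ℝ)+1)^2*(2*V + ((j:ℝ)+2)*u)^2) := by ring
      _ ≤ ((t-1)^2)^2*(2*((j:ℝ)+2)*V*(B^2 + (j:ℝ)*(2*V + ((j:ℝ)+2)*u))) :=
          mul_le_mul_of_nonneg_left hstar (by positivity)
      _ = 2*((j:ℝ)+2)*((t-1)^2*V)*((t-1)^2*B^2 + (j:ℝ)*((t-1)^2*(2*V + ((j:ℝ)+2)*u))) := by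
          ring
  have eS : S = P - R := by rw [hSdef, hPdef, hRdef]; ring
  have hS2 : S = (t-1)^2*(Wt - V) := by
    rw [eS, g1, g2, f7]; ring
  have hS0 : (0:ℝ) ≤ S := by
    rw [hS2]
    exact mul_nonneg (by positivity) (by linarith)
  have hPR : R ≤ P := by linarith [eS ▸ hS0]
  have hP0 : (0:ℝ) < P := by rw [hPdef]; exact pow_pos (by linarith) 2
  have hR0 : (0:ℝ) ≤ R := by
    rw [g2]
    apply mul_nonneg (by positivity)
    have h5 : (0:ℝ) ≤ ((j:ℝ)+2)*u := mul_nonneg (by positivity) hu0.le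
    linarith [hV0, h5]
  have hQe : Q = P - ((j:ℝ)+2)*R + 2*((j:ℝ)+2)*W2 := by
    rw [hQdef, hPdef, hRdef, hW2def]; ring
  have hd2 : (P-R)^2 ≤ (P + (j:ℝ)*R)*Q := by
    rw [hQe]
    have hid2 : (P + (j:ℝ)*R)*(P - ((j:ℝ)+2)*R + 2*((j:ℝ)+2)*W2) - (P-R)^2
        = 2*((j:ℝ)+2)*W2*(P + (j:ℝ)*R) - ((j:ℝ)+1)^2*R^2 := by ring
    linarith [hd, hid2]
  have hPjR : (0:ℝ) < P + (j:ℝ)*R := by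
    have : (0:ℝ) ≤ (j:ℝ)*R := mul_nonneg (by positivity) hR0
    linarith
  have amgm := amgm_aux P R hR0 hPR j
  have key : S^(j+2) ≤ Q*P^(j+1) := by
    have c1 : S^(j+2)*(P + (j:ℝ)*R) = (P-R)^2*((P-R)^j*(P + (j:ℝ)*R)) := by
      rw [eS]; ring
    have c2 : (P-R)^2*((P-R)^j*(P + (j:ℝ)*R)) ≤ (P-R)^2*P^(j+1) :=
      mul_le_mul_of_nonneg_left amgm (sq_nonneg _)
    have c3 : (P-R)^2*P^(j+1) ≤ ((P + (j:ℝ)*R)*Q)*P^(j+1) :=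
      mul_le_mul_of_nonneg_right hd2 (pow_nonneg hP0.le _)
    have c4 : S^(j+2)*(P + (j:ℝ)*R) ≤ (Q*P^(j+1))*(P + (j:ℝ)*R) := by
      calc S^(j+2)*(P + (j:ℝ)*R) = (P-R)^2*((P-R)^j*(P + (j:ℝ)*R)) := c1
        _ ≤ (P-R)^2*P^(j+1) := c2
        _ ≤ ((P + (j:ℝ)*R)*Q)*P^(j+1) := c3
        _ = (Q*P^(j+1))*(P + (j:ℝ)*R) := by ring
    exact le_of_mul_le_mul_right c4 hPjR
  -- final assembly
  have hp3 : t^(j+2+1) = u*t^2 := by rw [hu]; ring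
  have hp4 : t^(2*(j+2)) = u^2*t^2 := by rw [hu]; ring
  rw [hp2, hp4] at hx
  rw [hp2, hp3] at hy
  push_cast at hx hy ⊢
  have hD0 : (0:ℝ) < ((j:ℝ)+2+1)*P := mul_pos (by positivity) hP0
  have hxy : x - y = S/(((j:ℝ)+2+1)*P) := by
    rw [hx, hy, div_sub_div_same, hSdef, hPdef]
    congr 1
    ring
  have hQD : ((j:ℝ)+2)*(x+y) = 1 - Q/(((j:ℝ)+2+1)*P) := by
    rw [hx, hy, hQdef, hPdef]
    have h1 : (u*t-1) ≠ 0 := by linarith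
    have h2 : ((j:ℝ)+2+1) ≠ 0 := by positivity
    field_simp
    ring
  rw [hxy, hQD]
  have hfin : ((j:ℝ)+2+1)^(j+1)*(S/(((j:ℝ)+2+1)*P))^(j+2) ≤ Q/(((j:ℝ)+2+1)*P) := by
    rw [div_pow, ← mul_div_assoc]
    rw [div_le_div_iff₀ (pow_pos hD0 (j+2)) hD0]
    calc ((j:ℝ)+2+1)^(j+1)*S^(j+2)*(((j:ℝ)+2+1)*P)
        ≤ ((j:ℝ)+2+1)^(j+1)*(Q*P^(j+1))*(((j:ℝ)+2+1)*P) := by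
          apply mul_le_mul_of_nonneg_right _ hD0.le
          exact mul_le_mul_of_nonneg_left key (by positivity)
      _ = Q*(((j:ℝ)+2+1)*P)^(j+2) := by rw [mul_pow]; ring
  linarith
end

section
/- Let n ≥ 3 be an integer and let t > 1 be a real number. Set x(t) = (t^(2n) − (n+1)·t^n + n·t^(n−1)) / ((n+1)·(t^n − 1)^2) and y(t) = (n·t^(n+1) − (n+1)·t^n + 1) / ((n+1)·(t^n − 1)^2). Then n·(x(t) + y(t)) + (n+1)^(n−1)·(x(t) − y(t))^n < 1. -/
open Finset

private lemma gauss_sum_real (N : ℕ) :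
    ∑ m ∈ range N, ((m : ℝ) + 1) = N * (N + 1) / 2 := by
  induction N with
  | zero => simp
  | succ k ih => rw [sum_range_succ, ih]; push_cast; ring

private lemma S1_identity (t : ℝ) (N : ℕ) :
    (∑ m ∈ range N, ((m : ℝ) + 1) * t ^ m) * (t - 1) ^ 2
      = N * t ^ N * (t - 1) - (t ^ N - 1) := by
  induction N with
  | zero => simp
  | succ k ih => rw [sum_range_succ, add_mul, ih]; push_cast; ring

private lemma amgm_aux_s9 (P X : ℝ) (hX : 0 ≤ X) (hPX : 0 ≤ P - X) :
    ∀ M : ℕ, (P - X) ^ M * (P + M * X) ≤ P ^ (M + 1) := by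
  intro M
  induction M with
  | zero => simp
  | succ k ih =>
    have hP : 0 ≤ P := by linarith
    have h1 : (P - X) ^ (k + 1) * (P + (k + 1) * X)
        ≤ (P - X) ^ k * (P * (P + k * X)) := by
      have h2 : (P - X) * (P + (k + 1) * X) ≤ P * (P + k * X) := by
        have : (0:ℝ) ≤ (k + 1) * X ^ 2 := by positivity
        nlinarith
      calc (P - X) ^ (k + 1) * (P + (k + 1) * X)
          = (P - X) ^ k * ((P - X) * (P + ((k:ℝ) + 1) * X)) := by push_cast; ring
        _ ≤ (P - X) ^ k * (P * (P + k * X)) := by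
            apply mul_le_mul_of_nonneg_left _ (pow_nonneg hPX k)
            exact h2
    calc (P - X) ^ (k + 1) * (P + (↑(k + 1)) * X)
        ≤ (P - X) ^ k * (P * (P + k * X)) := by push_cast at h1 ⊢; exact h1
      _ = P * ((P - X) ^ k * (P + k * X)) := by ring
      _ ≤ P * P ^ (k + 1) := mul_le_mul_of_nonneg_left ih hP
      _ = P ^ (k + 1 + 1) := by ring

set_option maxHeartbeats 2000000 in
theorem truncated_cone_necessary_strict (n : ℕ) (hn : 3 ≤ n) (t : ℝ) (ht : 1 < t)
    (x y : ℝ)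
    (hx : x = (t ^ (2 * n) - (n + 1) * t ^ n + n * t ^ (n - 1)) /
      ((n + 1) * (t ^ n - 1) ^ 2))
    (hy : y = (n * t ^ (n + 1) - (n + 1) * t ^ n + 1) /
      ((n + 1) * (t ^ n - 1) ^ 2)) :
    n * (x + y) + (n + 1) ^ (n - 1) * (x - y) ^ n < 1 := by
  obtain ⟨N, rfl⟩ : ∃ N, n = N + 1 := ⟨n - 1, by omega⟩
  have hN : 2 ≤ N := by omega
  have ht0 : (0:ℝ) < t := by linarith
  have ht1 : t - 1 ≠ 0 := by intro h; nlinarith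
  -- basic objects
  set G : ℝ := ∑ k ∈ range (N + 1), t ^ k with hGdef
  set gN : ℝ := ∑ k ∈ range N, t ^ k with hgNdef
  set S1 : ℝ := ∑ m ∈ range N, ((m : ℝ) + 1) * t ^ m with hS1def
  have hg : G * (t - 1) = t ^ (N + 1) - 1 := geom_sum_mul t (N + 1)
  have hgN : gN * (t - 1) = t ^ N - 1 := geom_sum_mul t N
  have hS1 : S1 * (t - 1) ^ 2 = N * t ^ N * (t - 1) - (t ^ N - 1) := S1_identity t N
  have hGpos : 0 < G := by
    apply Finset.sum_pos (fun k _ => pow_pos ht0 k) ⟨0, by simp⟩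
  have hS1pos : 0 < S1 := by
    apply Finset.sum_pos (fun m _ => by positivity) ⟨0, by simp; omega⟩
  have htNpos : 0 < t ^ N := pow_pos ht0 N
  -- abbreviations
  set P : ℝ := G ^ 2 with hPdef
  set Q : ℝ := G ^ 2 - ((N:ℝ) + 1) * t ^ N - 2 * S1 with hQdef
  set B : ℝ := G ^ 2 - ((N:ℝ) + 1) ^ 2 * t ^ N with hBdef
  set B' : ℝ := G ^ 2 + ((N:ℝ) + 1) * ((N:ℝ) - 1) * t ^ N with hB'def
  -- the reflected sum T
  set T : ℝ := ∑ m ∈ range N, ((m : ℝ) + 1) * t ^ (2 * N - m) with hTdef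
  have hT : T = t ^ (N + 1) * (((N:ℝ) + 1) * gN - S1) := by
    have h2 : ∑ m ∈ range N, (t ^ (N + 1) * (((N:ℝ) + 1) * t ^ m)
        - t ^ (N + 1) * (((m:ℝ) + 1) * t ^ m))
        = t ^ (N + 1) * (((N:ℝ) + 1) * gN - S1) := by
      rw [Finset.sum_sub_distrib, ← Finset.mul_sum, ← Finset.mul_sum, ← Finset.mul_sum,
        ← mul_sub, hgNdef, hS1def]
    rw [hTdef, ← Finset.sum_range_reflect, ← h2]
    apply Finset.sum_congr rfl
    intro m hm
    rw [Finset.mem_range] at hm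
    rw [show 2 * N - (N - 1 - m) = N + 1 + m by omega,
      show N - 1 - m = N - (m + 1) by omega, Nat.cast_sub (by omega)]
    push_cast
    rw [pow_add, pow_add]
    ring
  have hTS : T + S1 = G ^ 2 - ((N:ℝ) + 1) * t ^ N := by
    have hcancel := pow_ne_zero 2 ht1
    apply mul_right_cancel₀ hcancel
    rw [hT]
    have e1 : t ^ (N + 1) * (((N:ℝ) + 1) * gN - S1) * (t - 1) ^ 2
        = ((N:ℝ) + 1) * t ^ (N + 1) * (t - 1) * (gN * (t - 1))
          - t ^ (N + 1) * (S1 * (t - 1) ^ 2) := by ring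
    calc (t ^ (N + 1) * (((N:ℝ) + 1) * gN - S1) + S1) * (t - 1) ^ 2
        = ((N:ℝ) + 1) * t ^ (N + 1) * (t - 1) * (gN * (t - 1))
          - t ^ (N + 1) * (S1 * (t - 1) ^ 2) + S1 * (t - 1) ^ 2 := by ring
      _ = ((N:ℝ) + 1) * t ^ (N + 1) * (t - 1) * (t ^ N - 1)
          - t ^ (N + 1) * (N * t ^ N * (t - 1) - (t ^ N - 1))
          + (N * t ^ N * (t - 1) - (t ^ N - 1)) := by rw [hgN, hS1]
      _ = (G * (t - 1)) ^ 2 - ((N:ℝ) + 1) * t ^ N * (t - 1) ^ 2 := by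
          rw [hg]; ring
      _ = (G ^ 2 - ((N:ℝ) + 1) * t ^ N) * (t - 1) ^ 2 := by ring
  -- sum evaluations
  have hgauss : ∑ m ∈ range N, ((m : ℝ) + 1) = N * (N + 1) / 2 := gauss_sum_real N
  have hSr : ∑ m ∈ range N, ((m : ℝ) + 1) * (t ^ (2 * N - m) - t ^ m) = Q := by
    have : ∑ m ∈ range N, ((m : ℝ) + 1) * (t ^ (2 * N - m) - t ^ m)
        = T - S1 := by
      rw [hTdef, hS1def, ← Finset.sum_sub_distrib]
      apply Finset.sum_congr rfl; intro m _; ring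
    rw [this, hQdef]
    linarith [hTS]
  have hSf : ∑ m ∈ range N, ((m : ℝ) + 1) * (t ^ (2 * N - m) + t ^ m - 2 * t ^ N) = B := by
    have : ∑ m ∈ range N, ((m : ℝ) + 1) * (t ^ (2 * N - m) + t ^ m - 2 * t ^ N)
        = T + S1 - (∑ m ∈ range N, ((m : ℝ) + 1)) * (2 * t ^ N) := by
      rw [hTdef, hS1def, Finset.sum_mul, ← Finset.sum_add_distrib, ← Finset.sum_sub_distrib]
      apply Finset.sum_congr rfl; intro m _; ring
    rw [this, hTS, hgauss, hBdef]; ring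
  have hSg : ∑ m ∈ range N, ((m : ℝ) + 1) * (t ^ (2 * N - m) + t ^ m + 2 * t ^ N) = B' := by
    have : ∑ m ∈ range N, ((m : ℝ) + 1) * (t ^ (2 * N - m) + t ^ m + 2 * t ^ N)
        = T + S1 + (∑ m ∈ range N, ((m : ℝ) + 1)) * (2 * t ^ N) := by
      rw [hTdef, hS1def, Finset.sum_mul, ← Finset.sum_add_distrib, ← Finset.sum_add_distrib]
      apply Finset.sum_congr rfl; intro m _; ring
    rw [this, hTS, hgauss, hB'def]; ring
  -- positivity
  have hab : ∀ m ∈ range N, t ^ (2 * N - m) * t ^ m = (t ^ N) ^ 2 := by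
    intro m hm; rw [Finset.mem_range] at hm
    rw [← pow_add, ← pow_mul, show 2 * N - m + m = N * 2 by omega]
  have hQpos : 0 < Q := by
    rw [← hSr]
    apply Finset.sum_pos _ ⟨0, by simp; omega⟩
    intro m hm
    rw [Finset.mem_range] at hm
    have h1 : t ^ m < t ^ (2 * N - m) := pow_lt_pow_right₀ ht (by omega)
    have h2 : (0:ℝ) < (m:ℝ) + 1 := by positivity
    nlinarith
  have hterm_pos : ∀ m ∈ range N, 0 < t ^ (2 * N - m) + t ^ m - 2 * t ^ N := by
    intro m hm
    have habm := hab m hm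
    rw [Finset.mem_range] at hm
    have h1 : t ^ N < t ^ (2 * N - m) := pow_lt_pow_right₀ ht (by omega)
    have h2 : t ^ m < t ^ N := pow_lt_pow_right₀ ht (by omega)
    nlinarith [mul_pos (sub_pos.mpr h1) (sub_pos.mpr h2)]
  have hBpos : 0 < B := by
    rw [← hSf]
    apply Finset.sum_pos _ ⟨0, by simp; omega⟩
    intro m hm
    have := hterm_pos m hm
    have h2 : (0:ℝ) < (m:ℝ) + 1 := by positivity
    nlinarith
  -- Cauchy-Schwarz
  have hCS : Q ^ 2 ≤ B * B' := by
    rw [← hSr, ← hSf, ← hSg]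
    apply Finset.sum_sq_le_sum_mul_sum_of_sq_eq_mul
    · intro m hm; exact mul_nonneg (by positivity) (hterm_pos m hm).le
    · intro m hm
      have h2 : t ^ m ≤ t ^ N := pow_le_pow_right₀ ht.le (by rw [Finset.mem_range] at hm; omega)
      have := pow_pos ht0 (2 * N - m)
      have := pow_pos ht0 m
      positivity
    · intro m hm
      have habm := hab m hm
      linear_combination (-4 * ((m:ℝ) + 1) ^ 2) * habm
  -- AM-GM step
  have hstep : Q ^ (N - 1) * B' < P ^ N := by
    have hXQ : Q = P - (((N:ℝ) + 1) * t ^ N + 2 * S1) := by rw [hQdef, hPdef]; ring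
    have hX0 : (0:ℝ) ≤ ((N:ℝ) + 1) * t ^ N + 2 * S1 := by positivity
    have hamgm := amgm_aux_s9 P (((N:ℝ) + 1) * t ^ N + 2 * S1) hX0 (by rw [← hXQ]; exact hQpos.le) (N - 1)
    rw [show N - 1 + 1 = N by omega] at hamgm
    have hcast : ((N - 1 : ℕ) : ℝ) = (N:ℝ) - 1 := by
      rw [Nat.cast_sub (by omega)]; norm_num
    rw [hcast, ← hXQ] at hamgm
    have hB'lt : B' < P + ((N:ℝ) - 1) * (((N:ℝ) + 1) * t ^ N + 2 * S1) := by
      rw [hB'def, hPdef]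
      have h1 : (0:ℝ) < (N:ℝ) - 1 := by
        have : (2:ℝ) ≤ N := by exact_mod_cast hN
        linarith
      nlinarith
    calc Q ^ (N - 1) * B' < Q ^ (N - 1) * (P + ((N:ℝ) - 1) * (((N:ℝ) + 1) * t ^ N + 2 * S1)) := by
          apply mul_lt_mul_of_pos_left hB'lt (pow_pos hQpos (N - 1))
      _ ≤ P ^ N := hamgm
  -- key inequality
  have key : Q ^ (N + 1) < P ^ N * B := by
    have e1 : Q ^ (N + 1) = Q ^ (N - 1) * Q ^ 2 := by
      rw [← pow_add]; congr 1; omega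
    have e2 : Q ^ (N - 1) * Q ^ 2 ≤ Q ^ (N - 1) * (B * B') :=
      mul_le_mul_of_nonneg_left hCS (pow_nonneg hQpos.le _)
    have e3 : Q ^ (N - 1) * (B * B') = B * (Q ^ (N - 1) * B') := by ring
    have e4 : B * (Q ^ (N - 1) * B') < B * P ^ N :=
      mul_lt_mul_of_pos_left hstep hBpos
    calc Q ^ (N + 1) = Q ^ (N - 1) * Q ^ 2 := e1
      _ ≤ Q ^ (N - 1) * (B * B') := e2
      _ = B * (Q ^ (N - 1) * B') := e3
      _ < B * P ^ N := e4
      _ = P ^ N * B := by ring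
  -- rewrite x+y and x-y
  have hGne : G ≠ 0 := hGpos.ne'
  have hden2 : ((N:ℝ) + 2) * G ^ 2 ≠ 0 := by positivity
  have hden1 : ((N:ℝ) + 1 + 1) * (t ^ (N + 1) - 1) ^ 2 ≠ 0 := by
    rw [← hg]
    have h0 : G * (t - 1) ≠ 0 := mul_ne_zero hGne ht1
    exact mul_ne_zero (by positivity) (pow_ne_zero 2 h0)
  have htn1 : t ^ (N + 1) - 1 ≠ 0 := by
    have : (1:ℝ) < t ^ (N + 1) := one_lt_pow₀ ht (by omega)
    intro h; nlinarith
  have eG : G = (t ^ (N + 1) - 1) / (t - 1) := by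
    rw [eq_div_iff ht1]; exact hg
  have eS1 : S1 = ((N:ℝ) * t ^ N * (t - 1) - (t ^ N - 1)) / (t - 1) ^ 2 := by
    rw [eq_div_iff (pow_ne_zero 2 ht1)]; exact hS1
  have hsum : x + y = (G ^ 2 + ((N:ℝ) + 1) * t ^ N) / (((N:ℝ) + 2) * G ^ 2) := by
    rw [hx, hy, ← add_div, eG]
    push_cast
    field_simp
    ring
  have hdiff : x - y = Q / (((N:ℝ) + 2) * G ^ 2) := by
    rw [hx, hy, div_sub_div_same, hQdef, eG, eS1]
    push_cast
    field_simp
    ring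
  -- final computation
  simp only [Nat.add_sub_cancel]
  push_cast
  rw [hsum, hdiff, div_pow]
  have hPpos : 0 < P := by rw [hPdef]; positivity
  have ht1eq : ((N:ℝ) + 1) * ((G ^ 2 + ((N:ℝ) + 1) * t ^ N) / (((N:ℝ) + 2) * G ^ 2))
      = 1 - B / (((N:ℝ) + 2) * P) := by
    rw [hBdef, hPdef]
    have hG2 : G ^ 2 ≠ 0 := pow_ne_zero 2 hGne
    have hN2 : ((N:ℝ) + 2) ≠ 0 := by positivity
    field_simp
    ring
  have ht2eq : ((N:ℝ) + 1 + 1) ^ N * (Q ^ (N + 1) / (((N:ℝ) + 2) * G ^ 2) ^ (N + 1))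
      = Q ^ (N + 1) / (((N:ℝ) + 2) * P ^ (N + 1)) := by
    rw [hPdef, mul_pow, (by ring : ((N:ℝ) + 1 + 1) = ((N:ℝ) + 2)), mul_div_assoc']
    rw [div_eq_div_iff (by positivity) (by positivity)]
    rw [pow_succ ((N:ℝ) + 2) N]
    ring
  rw [ht1eq, ht2eq]
  have hlt : Q ^ (N + 1) / (((N:ℝ) + 2) * P ^ (N + 1)) < B / (((N:ℝ) + 2) * P) := by
    rw [div_lt_div_iff₀ (by positivity) (by positivity)]
    have hmul := mul_lt_mul_of_pos_right key (show (0:ℝ) < ((N:ℝ) + 2) * P by positivity)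
    calc Q ^ (N + 1) * (((N:ℝ) + 2) * P) < P ^ N * B * (((N:ℝ) + 2) * P) := hmul
      _ = B * (((N:ℝ) + 2) * P ^ (N + 1)) := by ring
  linarith [hlt]
end

section
/- Let n ≥ 3 be an integer. The function t ↦ ((t^n − 1)^(2n) − n^2·t^(n−1)·(t − 1)^2·(t^n − 1)^(2n−2)) / ((t^(2n) − n·t^(n+1) + n·t^(n−1) − 1)^n) is nonincreasing on the open interval (1, ∞). -/
open Set

private lemma L2 (m : ℕ) {t : ℝ} (ht : 1 ≤ t) :
    (t+1)^(m+1) ≤ 2^m * (t^(m+1) + 1) := by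
  induction m with
  | zero => norm_num
  | succ k ih =>
    have h1 : (1:ℝ) ≤ t^(k+1) := by simpa using pow_le_pow_left₀ (by norm_num : (0:ℝ)≤1) ht (k+1)
    have h2 : (t+1)^(k+2) = (t+1)^(k+1)*(t+1) := by ring
    have h3 : (t+1)^(k+1)*(t+1) ≤ (2^k*(t^(k+1)+1))*(t+1) :=
      mul_le_mul_of_nonneg_right ih (by linarith)
    have h4 : (2^k*(t^(k+1)+1))*(t+1) ≤ 2^(k+1)*(t^(k+2)+1) := by
      have h5 : (0:ℝ) ≤ 2^k := by positivity
      have h6 : (t^(k+1)-1)*(t-1) ≥ 0 := mul_nonneg (by linarith) (by linarith)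
      have h7 : 2^(k+1)*(t^(k+2)+1) - (2^k*(t^(k+1)+1))*(t+1) = 2^k*((t^(k+1)-1)*(t-1)) := by ring
      nlinarith [mul_nonneg h5 h6]
    calc (t+1)^(k+2) = (t+1)^(k+1)*(t+1) := h2
    _ ≤ (2^k*(t^(k+1)+1))*(t+1) := h3
    _ ≤ 2^(k+1)*(t^(k+2)+1) := h4

private lemma L1 (m : ℕ) {t : ℝ} (ht : 1 ≤ t) :
    ((m:ℝ)+1) * (t-1) * (t+1)^m ≤ 2^m * (t^(m+1) - 1) := by
  induction m with
  | zero => norm_num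
  | succ k ih =>
    have hL2 := L2 k ht
    have h3 : (((k:ℝ)+1)*(t-1)*(t+1)^k)*(t+1) ≤ (2^k*(t^(k+1)-1))*(t+1) :=
      mul_le_mul_of_nonneg_right ih (by linarith)
    have h4 : ((t+1)^(k+1))*(t-1) ≤ (2^k*(t^(k+1)+1))*(t-1) :=
      mul_le_mul_of_nonneg_right hL2 (by linarith)
    have h5 : 2^(k+1)*(t^(k+2)-1) = (2^k*(t^(k+1)-1))*(t+1) + (2^k*(t^(k+1)+1))*(t-1) := by ring
    have h6 : ((k:ℝ)+1+1)*(t-1)*(t+1)^(k+1) = ((k:ℝ)+1)*(t-1)*(t+1)^k*(t+1) + (t+1)^(k+1)*(t-1) := by ring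
    push_cast
    nlinarith [h3, h4, h5, h6]

private lemma E_nonneg (n : ℕ) (hn : 1 ≤ n) {t : ℝ} (ht : 1 ≤ t) :
    (t^n - 1)*(t+1) ≤ (n:ℝ)*(t-1)*(t^n+1) := by
  induction n with
  | zero => omega
  | succ k ih =>
    rcases Nat.eq_or_lt_of_le hn with h | h
    · rw [← h]; norm_num
    · have hk : 1 ≤ k := by omega
      have ihk := ih hk
      have hb : 1 + ((k:ℝ)+1)*(t-1) ≤ t^(k+1) := by
        have := one_add_mul_le_pow (a := t-1) (by linarith) (k+1)
        calc 1 + ((k:ℝ)+1)*(t-1) = 1 + ((k+1:ℕ):ℝ)*(t-1) := by push_cast; ring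
        _ ≤ (1+(t-1))^(k+1) := this
        _ = t^(k+1) := by norm_num
      have hstep : ((k:ℝ)+1)*(t-1)*(t^(k+1)+1) - (t^(k+1)-1)*(t+1)
          = t*((k:ℝ)*(t-1)*(t^k+1) - (t^k-1)*(t+1)) + (t-1)*(t^(k+1) - (1+((k:ℝ)+1)*(t-1))) := by
        ring
      have ht0 : (0:ℝ) ≤ t := by linarith
      push_cast
      nlinarith [mul_le_mul_of_nonneg_left ihk ht0, mul_le_mul_of_nonneg_left hb (by linarith : (0:ℝ) ≤ t-1), hstep]


private lemma one_le_pow' {t : ℝ} (ht : 1 ≤ t) (j : ℕ) : (1:ℝ) ≤ t^j := by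
  simpa using pow_le_pow_left₀ (by norm_num) ht j

private lemma pow2mul {t : ℝ} (ht : 1 ≤ t) (k : ℕ) :
    (2:ℝ)^(2*k)*t^k ≤ (t+1)^(2*k) := by
  calc (2:ℝ)^(2*k)*t^k = ((2:ℝ)^2)^k*t^k := by rw [pow_mul]
  _ = ((2:ℝ)^2*t)^k := (mul_pow _ _ _).symm
  _ ≤ ((t+1)^2)^k := by
      apply pow_le_pow_left₀ (by positivity)
      nlinarith [sq_nonneg (t-1)]
  _ = (t+1)^(2*k) := (pow_mul _ _ _).symm

private lemma pow2mul_lt {t : ℝ} (ht : 1 < t) {k : ℕ} (hk : k ≠ 0) :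
    (2:ℝ)^(2*k)*t^k < (t+1)^(2*k) := by
  calc (2:ℝ)^(2*k)*t^k = ((2:ℝ)^2)^k*t^k := by rw [pow_mul]
  _ = ((2:ℝ)^2*t)^k := (mul_pow _ _ _).symm
  _ < ((t+1)^2)^k := by
      apply pow_lt_pow_left₀ _ (by positivity) hk
      nlinarith [sq_nonneg (t-1)]
  _ = (t+1)^(2*k) := (pow_mul _ _ _).symm

private lemma G_nonneg (m : ℕ) {t : ℝ} (ht : 1 ≤ t) :
    ((m:ℝ)+3)*((m:ℝ)+2)*t^(m+1)*(t-1)^2*(t+1) ≤ 2*(t^(m+3)-1)*(t^(m+2)-1) := by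
  have ht1 : (0:ℝ) ≤ t - 1 := by linarith
  have h1 : ((m:ℝ)+3)*(t-1)*(t+1)^(m+2) ≤ 2^(m+2)*(t^(m+3)-1) := by
    have := L1 (m+2) ht
    push_cast at this
    calc ((m:ℝ)+3)*(t-1)*(t+1)^(m+2) = ((m:ℝ)+2+1)*(t-1)*(t+1)^(m+2) := by ring
    _ ≤ 2^(m+2)*(t^(m+2+1)-1) := this
    _ = 2^(m+2)*(t^(m+3)-1) := by rw [show m+2+1 = m+3 from by omega]
  have h2 : ((m:ℝ)+2)*(t-1)*(t+1)^(m+1) ≤ 2^(m+1)*(t^(m+2)-1) := by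
    have := L1 (m+1) ht
    push_cast at this
    calc ((m:ℝ)+2)*(t-1)*(t+1)^(m+1) = ((m:ℝ)+1+1)*(t-1)*(t+1)^(m+1) := by ring
    _ ≤ 2^(m+1)*(t^(m+1+1)-1) := this
    _ = 2^(m+1)*(t^(m+2)-1) := by rw [show m+1+1 = m+2 from by omega]
  have hB := pow2mul ht (m+1)
  have hlhs2 : (0:ℝ) ≤ ((m:ℝ)+2)*(t-1)*(t+1)^(m+1) :=
    mul_nonneg (mul_nonneg (by positivity) ht1) (by positivity)
  have hrhs1 : (0:ℝ) ≤ 2^(m+2)*(t^(m+3)-1) := by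
    have := one_le_pow' ht (m+3)
    have h2p : (0:ℝ) ≤ (2:ℝ)^(m+2) := by positivity
    nlinarith
  have hA := mul_le_mul h1 h2 hlhs2 hrhs1
  have hcoef : (0:ℝ) ≤ ((m:ℝ)+3)*((m:ℝ)+2)*(t-1)^2*(t+1) :=
    mul_nonneg (mul_nonneg (mul_nonneg (by positivity) (by positivity)) (sq_nonneg _)) (by linarith)
  have hmain : (2:ℝ)^(2*(m+1))*(((m:ℝ)+3)*((m:ℝ)+2)*t^(m+1)*(t-1)^2*(t+1))
      ≤ (2:ℝ)^(2*(m+1))*(2*(t^(m+3)-1)*(t^(m+2)-1)) := by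
    calc (2:ℝ)^(2*(m+1))*(((m:ℝ)+3)*((m:ℝ)+2)*t^(m+1)*(t-1)^2*(t+1))
        = (((m:ℝ)+3)*((m:ℝ)+2)*(t-1)^2*(t+1))*((2:ℝ)^(2*(m+1))*t^(m+1)) := by ring
    _ ≤ (((m:ℝ)+3)*((m:ℝ)+2)*(t-1)^2*(t+1))*((t+1)^(2*(m+1))) :=
        mul_le_mul_of_nonneg_left hB hcoef
    _ = (((m:ℝ)+3)*(t-1)*(t+1)^(m+2)) * (((m:ℝ)+2)*(t-1)*(t+1)^(m+1)) := by ring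
    _ ≤ (2^(m+2)*(t^(m+3)-1)) * (2^(m+1)*(t^(m+2)-1)) := hA
    _ = (2:ℝ)^(2*(m+1))*(2*(t^(m+3)-1)*(t^(m+2)-1)) := by ring
  exact le_of_mul_le_mul_left hmain (by positivity)

private lemma Cp_pos (m : ℕ) {t : ℝ} (ht : 1 < t) :
    0 < t^(2*m+6) - ((m:ℝ)+3)*t^(m+4) + ((m:ℝ)+3)*t^(m+2) - 1 := by
  have ht1 : (0:ℝ) < t - 1 := by linarith
  have h1 : ((m:ℝ)+3)*(t-1)*(t+1)^(m+2) ≤ 2^(m+2)*(t^(m+3)-1) := by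
    have := L1 (m+2) ht.le
    push_cast at this
    calc ((m:ℝ)+3)*(t-1)*(t+1)^(m+2) = ((m:ℝ)+2+1)*(t-1)*(t+1)^(m+2) := by ring
    _ ≤ 2^(m+2)*(t^(m+2+1)-1) := this
    _ = 2^(m+2)*(t^(m+3)-1) := by rw [show m+2+1 = m+3 from by omega]
  have h2 : (t+1)^(m+3) ≤ 2^(m+2)*(t^(m+3)+1) := L2 (m+2) ht.le
  have hB := pow2mul_lt ht (k := m+2) (by omega)
  have hlhs2 : (0:ℝ) ≤ (t+1)^(m+3) := by positivity
  have hrhs1 : (0:ℝ) ≤ 2^(m+2)*(t^(m+3)-1) := by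
    have := one_le_pow' ht.le (m+3)
    have h2p : (0:ℝ) ≤ (2:ℝ)^(m+2) := by positivity
    nlinarith
  have hA := mul_le_mul h1 h2 hlhs2 hrhs1
  have hcoef : (0:ℝ) < ((m:ℝ)+3)*(t-1)*(t+1) :=
    mul_pos (mul_pos (by positivity) ht1) (by linarith)
  have hmain : (2:ℝ)^(2*(m+2))*(((m:ℝ)+3)*t^(m+2)*(t-1)*(t+1))
      < (2:ℝ)^(2*(m+2))*(t^(2*m+6)-1) := by
    calc (2:ℝ)^(2*(m+2))*(((m:ℝ)+3)*t^(m+2)*(t-1)*(t+1))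
        = (((m:ℝ)+3)*(t-1)*(t+1))*((2:ℝ)^(2*(m+2))*t^(m+2)) := by ring
    _ < (((m:ℝ)+3)*(t-1)*(t+1))*((t+1)^(2*(m+2))) :=
        mul_lt_mul_of_pos_left hB hcoef
    _ = (((m:ℝ)+3)*(t-1)*(t+1)^(m+2))*((t+1)^(m+3)) := by ring
    _ ≤ (2^(m+2)*(t^(m+3)-1))*(2^(m+2)*(t^(m+3)+1)) := hA
    _ = (2:ℝ)^(2*(m+2))*(t^(2*m+6)-1) := by ring
  have hfin := lt_of_mul_lt_mul_left hmain (by positivity : (0:ℝ) ≤ (2:ℝ)^(2*(m+2)))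
  have e2 : ((m:ℝ)+3)*t^(m+2)*(t-1)*(t+1) = ((m:ℝ)+3)*(t^(m+2)*t^2) - ((m:ℝ)+3)*t^(m+2) := by ring
  rw [show t^(m+4) = t^(m+2)*t^2 from by ring]
  linarith [hfin, e2.symm.le, e2.le]

theorem FG_antitone (n : ℕ) (hn : 3 ≤ n) :
    AntitoneOn (fun t : ℝ =>
      ((t ^ n - 1) ^ (2 * n) -
          (n : ℝ) ^ 2 * t ^ (n - 1) * (t - 1) ^ 2 * (t ^ n - 1) ^ (2 * n - 2)) /
        ((t ^ (2 * n) - (n : ℝ) * t ^ (n + 1) + (n : ℝ) * t ^ (n - 1) - 1) ^ n))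
      (Set.Ioi 1) := by
  obtain ⟨m, rfl⟩ : ∃ m, n = m + 3 := ⟨n - 3, by omega⟩
  rw [show 2*(m+3)-2 = 2*m+4 from by omega, show m+3-1 = m+2 from by omega,
      show m+3+1 = m+4 from by omega, show 2*(m+3) = 2*m+6 from by ring]
  push_cast
  apply antitoneOn_of_deriv_nonpos (convex_Ioi 1)
  · apply ContinuousOn.div
    · fun_prop
    · fun_prop
    · intro t htt
      exact pow_ne_zero _ (ne_of_gt (Cp_pos m htt))
  · rw [interior_Ioi]
    apply DifferentiableOn.div
    · fun_prop
    · fun_prop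
    · intro t htt
      exact pow_ne_zero _ (ne_of_gt (Cp_pos m htt))
  · intro x hx
    rw [interior_Ioi] at hx
    have hx1 : (1:ℝ) < x := hx
    have hCp := Cp_pos m hx1
    have hCpne : (x^(2*m+6) - ((m:ℝ)+3)*x^(m+4) + ((m:ℝ)+3)*x^(m+2) - 1) ≠ 0 := ne_of_gt hCp
    -- derivative pieces
    have hu := (hasDerivAt_pow (m+3) x).sub_const 1
    rw [show m+3-1 = m+2 from by omega] at hu
    have h1 := hu.pow (2*m+6)
    rw [show 2*m+6-1 = 2*m+5 from by omega] at h1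
    have h2a := (hasDerivAt_pow (m+2) x).const_mul (((m:ℝ)+3)^2)
    rw [show m+2-1 = m+1 from by omega] at h2a
    have h2b : HasDerivAt (fun y:ℝ => (y-1)^2) (2*(x-1)) x := by
      have := ((hasDerivAt_id x).sub_const 1).pow 2
      simp at this
      exact this
    have h2c := hu.pow (2*m+4)
    rw [show 2*m+4-1 = 2*m+3 from by omega] at h2c
    have hnum := h1.sub ((h2a.mul h2b).mul h2c)
    have hc1 := hasDerivAt_pow (2*m+6) x
    rw [show 2*m+6-1 = 2*m+5 from by omega] at hc1
    have hc2 := (hasDerivAt_pow (m+4) x).const_mul ((m:ℝ)+3)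
    rw [show m+4-1 = m+3 from by omega] at hc2
    have hc3 := (hasDerivAt_pow (m+2) x).const_mul ((m:ℝ)+3)
    rw [show m+2-1 = m+1 from by omega] at hc3
    have hCpd := ((hc1.sub hc2).add hc3).sub_const 1
    have hden := hCpd.pow (m+3)
    rw [show m+3-1 = m+2 from by omega] at hden
    have hdiv := hnum.div hden (pow_ne_zero _ hCpne)
    have hd2 : deriv (fun t : ℝ =>
        ((t ^ (m+3) - 1) ^ (2*m+6) -
            ((m:ℝ)+3) ^ 2 * t ^ (m+2) * (t - 1) ^ 2 * (t ^ (m+3) - 1) ^ (2*m+4)) /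
          ((t ^ (2*m+6) - ((m:ℝ)+3) * t ^ (m+4) + ((m:ℝ)+3) * t ^ (m+2) - 1) ^ (m+3))) x
        = (-((x^(m+3)-1)^(2*m+3)
            * ((x^(2*m+6) - ((m:ℝ)+3)*x^(m+4) + ((m:ℝ)+3)*x^(m+2) - 1)^(m+2))
            * (((m:ℝ)+3)^2 * x^(m+2)
                * (((m:ℝ)+3)*(x-1)*(x^(m+3)+1) - (x^(m+3)-1)*(x+1))
                * (2*(x^(m+3)-1)*(x^(m+2)-1)
                    - ((m:ℝ)+3)*((m:ℝ)+2)*x^(m+1)*(x-1)^2*(x+1)))))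
          / ((x^(2*m+6) - ((m:ℝ)+3)*x^(m+4) + ((m:ℝ)+3)*x^(m+2) - 1)^(m+3))^2 := by
      refine (hdiv.deriv).trans ?_
      simp only [Pi.pow_apply, Pi.sub_apply, Pi.mul_apply, Pi.add_apply, Pi.div_apply]
      push_cast
      ring
    rw [hd2]
    have hupos : (0:ℝ) < x^(m+3) - 1 := by
      have h := one_lt_pow₀ (a := x) (n := m+3) hx1 (by omega)
      linarith
    have hUnn : (0:ℝ) ≤ (x^(m+3)-1)^(2*m+3) := (pow_pos hupos _).le
    have hVnn : (0:ℝ) ≤ (x^(2*m+6) - ((m:ℝ)+3)*x^(m+4) + ((m:ℝ)+3)*x^(m+2) - 1)^(m+2) :=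
      (pow_pos hCp _).le
    have hE0 : (0:ℝ) ≤ ((m:ℝ)+3)*(x-1)*(x^(m+3)+1) - (x^(m+3)-1)*(x+1) := by
      have h := E_nonneg (m+3) (by omega) hx1.le
      push_cast at h
      linarith
    have hG0 : (0:ℝ) ≤ 2*(x^(m+3)-1)*(x^(m+2)-1)
        - ((m:ℝ)+3)*((m:ℝ)+2)*x^(m+1)*(x-1)^2*(x+1) := by
      have h := G_nonneg m hx1.le
      linarith
    have hW : (0:ℝ) ≤ ((m:ℝ)+3)^2 * x^(m+2)
        * (((m:ℝ)+3)*(x-1)*(x^(m+3)+1) - (x^(m+3)-1)*(x+1))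
        * (2*(x^(m+3)-1)*(x^(m+2)-1) - ((m:ℝ)+3)*((m:ℝ)+2)*x^(m+1)*(x-1)^2*(x+1)) :=
      mul_nonneg (mul_nonneg (mul_nonneg (by positivity) (by positivity)) hE0) hG0
    apply div_nonpos_of_nonpos_of_nonneg
    · exact neg_nonpos.mpr (mul_nonneg (mul_nonneg hUnn hVnn) hW)
    · exact sq_nonneg _
end
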